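/- For any I > 0, the function h(l) = 2 l² Φ(−l√I/2) on [0,∞) satisfies h(0) = 0, h(l) → 0 as l → ∞, h(l) > 0 for l > 0, and h has a unique critical point l̂ ∈ (0,∞), which is its global maximum; at l̂ the acceptance rate a(l̂) = 2Φ(−l̂√I/2) satisfies the first-order condition 2 a(l̂) = l̂ √I φ(l̂√I/2), where φ is the standard normal density. -/

import Mathlib

/-!
Put `x = l √I / 2`. Then `h'(l) = 2 l G(x)` with `G(x) = 2 Φ(-x) - x φ(x)`, and
`G'(x) = φ(x) (x² - 3)`. So `G` decreases on `[0, √3]` from `G(0) = 2 Φ(0) > 0`, and increases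
on `[√3, ∞)` towards its limit `0`, hence is negative there. Thus `G` has a single zero `x₀`,
where it changes sign from `+` to `-`, and `l̂ = 2 x₀ / √I` is the unique critical point and the
maximum of `h`. Negativity of `G` beyond `√3` is the Mills-ratio bound `2 Φ(-x) < x φ(x)`, which
also gives `h(l) → 0`.
-/

open Real Set Filter MeasureTheory ProbabilityTheory

/-- Standard normal cumulative distribution function. -/
noncomputable def Phi (x : ℝ) : ℝ := ∫ t in Set.Iic x, Real.exp (-t^2/2) / Real.sqrt (2*Real.pi)

open Topology

lemma StrictMonoOn.lt_of_tendsto_atTop {α β : Type*} [LinearOrder α] [NoMaxOrder α]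
    [LinearOrder β] [TopologicalSpace β] [OrderClosedTopology β] {f : α → β} {b : α} {L : β}
    (hf : StrictMonoOn f (Ici b)) (hlim : Tendsto f atTop (𝓝 L)) {x : α} (hx : b ≤ x) :
    f x < L := by
  have : Nonempty α := ⟨x⟩
  obtain ⟨y, hxy⟩ := exists_gt x
  have hyL : f y ≤ L := ge_of_tendsto hlim <| (eventually_ge_atTop y).mono fun z hz =>
    hf.monotoneOn (hx.trans hxy.le) (hx.trans (hxy.le.trans hz)) hz
  exact (hf hx (hx.trans hxy.le) hxy).trans_le hyL

lemma exists_sign_eq_sign_sub_of_strictAntiOn {f : ℝ → ℝ} {a b : ℝ} (hab : a ≤ b)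
    (hcont : ContinuousOn f (Icc a b)) (hanti : StrictAntiOn f (Icc a b)) (ha : 0 < f a)
    (hneg : ∀ x, b ≤ x → f x < 0) :
    ∃ x₀, a < x₀ ∧ ∀ x, a ≤ x → SignType.sign (f x) = SignType.sign (x₀ - x) := by
  obtain ⟨x₀, ⟨hax₀, hx₀b⟩, hfx₀⟩ :=
    intermediate_value_Icc' hab hcont ⟨(hneg b le_rfl).le, ha.le⟩
  have hx₀a : a < x₀ := hax₀.lt_of_ne (by rintro rfl; exact ha.ne' hfx₀)
  refine ⟨x₀, hx₀a, fun x hx => ?_⟩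
  rcases lt_trichotomy x x₀ with hlt | rfl | hgt
  · rw [sign_pos (sub_pos.2 hlt), sign_pos]
    exact hfx₀ ▸ hanti ⟨hx, hlt.le.trans hx₀b⟩ ⟨hax₀, hx₀b⟩ hlt
  · rw [hfx₀, sub_self]
  · rw [_root_.sign_neg (sub_neg.2 hgt), _root_.sign_neg]
    rcases le_or_gt x b with hxb | hbx
    · exact hfx₀ ▸ hanti ⟨hax₀, hx₀b⟩ ⟨hx, hxb⟩ hgt
    · exact hneg x hbx.le

lemma isMaxOn_of_sign_deriv {f : ℝ → ℝ} {a b : ℝ} (hab : a ≤ b) (hcont : ContinuousOn f (Ici a))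
    (hdiff : DifferentiableOn ℝ f (Ioi a))
    (hsign : ∀ x, a < x → SignType.sign (deriv f x) = SignType.sign (b - x)) :
    IsMaxOn f (Ici a) b := by
  have hmono : MonotoneOn f (Icc a b) := by
    refine monotoneOn_of_deriv_nonneg (convex_Icc a b) (hcont.mono Icc_subset_Ici_self)
      (hdiff.mono (by simp [Ioo_subset_Ioi_self])) fun x hx => ?_
    rw [interior_Icc] at hx
    exact (sign_eq_one_iff.1 ((hsign x hx.1).trans (sign_pos (sub_pos.2 hx.2)))).le
  have hanti : AntitoneOn f (Ici b) := by
    refine antitoneOn_of_deriv_nonpos (convex_Ici b) (hcont.mono (Ici_subset_Ici.2 hab))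
      (hdiff.mono (by simpa using Ioi_subset_Ioi hab)) fun x hx => ?_
    rw [interior_Ici] at hx
    exact (sign_eq_neg_one_iff.1
      ((hsign x (hab.trans_lt hx)).trans (_root_.sign_neg (sub_neg.2 hx)))).le
  intro x hx
  rcases le_total x b with hxb | hbx
  · exact hmono ⟨hx, hxb⟩ ⟨hab, le_rfl⟩ hxb
  · exact hanti (mem_Ici.2 le_rfl) hbx hbx

lemma deriv_eq_zero_iff_of_sign_deriv {f : ℝ → ℝ} {a b x : ℝ}
    (hsign : ∀ x, a < x → SignType.sign (deriv f x) = SignType.sign (b - x)) (hx : a < x) :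
    deriv f x = 0 ↔ x = b := by
  rw [← _root_.sign_eq_zero_iff, hsign x hx, _root_.sign_eq_zero_iff, sub_eq_zero, eq_comm]

local notation "φ" => gaussianPDFReal 0 1

lemma gaussianPDFReal_zero_one (x : ℝ) : φ x = exp (-x ^ 2 / 2) / √(2 * π) := by
  simp [gaussianPDFReal, div_eq_inv_mul]

lemma Phi_eq_integral (x : ℝ) : Phi x = ∫ t in Iic x, φ t := by
  simp only [Phi, gaussianPDFReal_zero_one]

lemma Phi_eq_cdf (x : ℝ) : Phi x = cdf (gaussianReal 0 1) x := by
  rw [cdf_eq_real, measureReal_def, gaussianReal_apply_eq_integral _ one_ne_zero,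
    ENNReal.toReal_ofReal
      (setIntegral_nonneg measurableSet_Iic fun t _ => gaussianPDFReal_nonneg _ _ t),
    Phi_eq_integral]

lemma tendsto_Phi_atBot : Tendsto Phi atBot (𝓝 0) := by
  simpa only [← funext Phi_eq_cdf] using tendsto_cdf_atBot (gaussianReal 0 1)

lemma Phi_pos (x : ℝ) : 0 < Phi x := by
  rw [Phi_eq_integral, setIntegral_pos_iff_support_of_nonneg_ae
    (ae_of_all _ (gaussianPDFReal_nonneg 0 1)) (integrable_gaussianPDFReal 0 1).integrableOn,
    Function.support_eq_univ fun t => (gaussianPDFReal_pos 0 1 t one_ne_zero).ne', univ_inter]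
  simp

lemma continuous_gaussianPDFReal (μ : ℝ) (v : NNReal) : Continuous (gaussianPDFReal μ v) := by
  unfold gaussianPDFReal
  fun_prop

lemma hasDerivAt_Phi (x : ℝ) : HasDerivAt Phi (φ x) x := by
  have hint : ∀ y, IntegrableOn φ (Iic y) := fun _ => (integrable_gaussianPDFReal 0 1).integrableOn
  have hPhi : Phi = fun y => Phi 0 + ∫ t in (0 : ℝ)..y, φ t := by
    ext y
    rw [← intervalIntegral.integral_Iic_sub_Iic (hint 0) (hint y), Phi_eq_integral,
      Phi_eq_integral]
    ring
  rw [hPhi]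
  exact (intervalIntegral.integral_hasDerivAt_right
    (integrable_gaussianPDFReal 0 1).intervalIntegrable
    (continuous_gaussianPDFReal 0 1).aestronglyMeasurable.stronglyMeasurableAtFilter
    (continuous_gaussianPDFReal 0 1).continuousAt).const_add _

lemma hasDerivAt_gaussianPDFReal_zero_one (x : ℝ) : HasDerivAt φ (-x * φ x) x := by
  rw [funext gaussianPDFReal_zero_one]
  refine (((hasDerivAt_pow 2 x).fun_neg.div_const 2).exp.div_const (√(2 * π))).congr_deriv ?_
  push_cast
  ring

lemma gaussianPDFReal_zero_neg (v : NNReal) (x : ℝ) :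
    gaussianPDFReal 0 v (-x) = gaussianPDFReal 0 v x := by
  simp [gaussianPDFReal]

lemma tendsto_pow_mul_gaussianPDFReal_zero_one_atTop (n : ℕ) :
    Tendsto (fun x => x ^ n * φ x) atTop (𝓝 0) := by
  have h := ((rpow_mul_exp_neg_mul_sq_isLittleO_exp_neg one_half_pos n).tendsto_zero_of_tendsto
    (tendsto_exp_atBot.comp <| tendsto_id.const_mul_atTop_of_neg (by norm_num))).div_const
      (√(2 * π))
  rw [zero_div] at h
  refine h.congr fun x => ?_
  rw [rpow_natCast, gaussianPDFReal_zero_one, mul_div_assoc]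
  congr 3
  ring

noncomputable def firstOrderGap (x : ℝ) : ℝ := 2 * Phi (-x) - x * φ x

lemma hasDerivAt_firstOrderGap (x : ℝ) :
    HasDerivAt firstOrderGap (φ x * (x ^ 2 - 3)) x := by
  have hPhi : HasDerivAt (fun y => Phi (-y)) (-φ x) x := by
    simpa [Function.comp_def, gaussianPDFReal_zero_neg] using
      (hasDerivAt_Phi (-x)).comp x (hasDerivAt_neg x)
  refine ((hPhi.const_mul 2).sub
    ((hasDerivAt_id x).mul (hasDerivAt_gaussianPDFReal_zero_one x))).congr_deriv ?_
  simp only [id_eq]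
  ring

lemma continuous_firstOrderGap : Continuous firstOrderGap :=
  continuous_iff_continuousAt.2 fun x => (hasDerivAt_firstOrderGap x).continuousAt

lemma strictAntiOn_firstOrderGap : StrictAntiOn firstOrderGap (Icc 0 √3) := by
  refine strictAntiOn_of_deriv_neg (convex_Icc 0 √3) continuous_firstOrderGap.continuousOn
    fun x hx => ?_
  rw [interior_Icc] at hx
  have hx3 : x ^ 2 < 3 := by nlinarith [sq_sqrt (show (0 : ℝ) ≤ 3 by norm_num), hx.1, hx.2]
  rw [(hasDerivAt_firstOrderGap x).deriv]
  exact mul_neg_of_pos_of_neg (gaussianPDFReal_pos 0 1 x one_ne_zero) (by linarith)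

lemma strictMonoOn_firstOrderGap : StrictMonoOn firstOrderGap (Ici √3) := by
  refine strictMonoOn_of_deriv_pos (convex_Ici √3) continuous_firstOrderGap.continuousOn
    fun x hx => ?_
  rw [interior_Ici] at hx
  have hx3 : 3 < x ^ 2 := by
    nlinarith [sq_sqrt (show (0 : ℝ) ≤ 3 by norm_num), sqrt_nonneg 3, mem_Ioi.1 hx]
  rw [(hasDerivAt_firstOrderGap x).deriv]
  exact mul_pos (gaussianPDFReal_pos 0 1 x one_ne_zero) (by linarith)

lemma tendsto_firstOrderGap_atTop : Tendsto firstOrderGap atTop (𝓝 0) := by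
  have hPhi := (tendsto_Phi_atBot.comp tendsto_neg_atTop_atBot).const_mul 2
  have hpdf := tendsto_pow_mul_gaussianPDFReal_zero_one_atTop 1
  have hgap := hPhi.sub hpdf
  simp only [mul_zero, sub_zero, pow_one] at hgap
  exact hgap

lemma exists_sign_firstOrderGap :
    ∃ x₀, 0 < x₀ ∧ ∀ x, 0 ≤ x → SignType.sign (firstOrderGap x) = SignType.sign (x₀ - x) := by
  refine exists_sign_eq_sign_sub_of_strictAntiOn (sqrt_nonneg 3)
    continuous_firstOrderGap.continuousOn strictAntiOn_firstOrderGap ?_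
    fun x hx => strictMonoOn_firstOrderGap.lt_of_tendsto_atTop tendsto_firstOrderGap_atTop hx
  simpa [firstOrderGap] using Phi_pos 0

lemma tendsto_sq_mul_Phi_neg_atTop : Tendsto (fun x => x ^ 2 * Phi (-x)) atTop (𝓝 0) := by
  have hmills : ∀ᶠ x in atTop, x ^ 2 * Phi (-x) ≤ x ^ 3 * φ x / 2 := by
    filter_upwards [eventually_ge_atTop √3] with x hx
    have hgap := strictMonoOn_firstOrderGap.lt_of_tendsto_atTop tendsto_firstOrderGap_atTop hx
    have hx0 : 0 ≤ x := (sqrt_nonneg 3).trans hx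
    unfold firstOrderGap at hgap
    nlinarith [sq_nonneg x]
  refine squeeze_zero' (Eventually.of_forall fun x => mul_nonneg (sq_nonneg x) (Phi_pos _).le)
    hmills ?_
  simpa using (tendsto_pow_mul_gaussianPDFReal_zero_one_atTop 3).div_const 2

noncomputable def speed (c l : ℝ) : ℝ := 2 * l ^ 2 * Phi (-(l * c) / 2)

lemma hasDerivAt_speed (c l : ℝ) :
    HasDerivAt (speed c) (2 * l * firstOrderGap (l * c / 2)) l := by
  have hPhi : HasDerivAt (fun l => Phi (-(l * c) / 2)) (-(c / 2) * φ (l * c / 2)) l := by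
    have h := (hasDerivAt_Phi (-(l * c) / 2)).comp l
      ((hasDerivAt_mul_const c).fun_neg.div_const 2)
    rw [neg_div, gaussianPDFReal_zero_neg] at h
    exact h.congr_deriv (by ring)
  refine (((hasDerivAt_pow 2 l).const_mul 2).mul hPhi).congr_deriv ?_
  simp only [firstOrderGap, show -(l * c / 2) = -(l * c) / 2 by ring]
  ring

lemma speed_pos {c l : ℝ} (hl : 0 < l) : 0 < speed c l :=
  mul_pos (by positivity) (Phi_pos _)

lemma tendsto_speed_atTop {c : ℝ} (hc : 0 < c) : Tendsto (speed c) atTop (𝓝 0) := by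
  have h := (tendsto_sq_mul_Phi_neg_atTop.comp
    ((tendsto_id.atTop_mul_const hc).atTop_div_const two_pos)).const_mul (8 / c ^ 2)
  rw [mul_zero] at h
  refine h.congr fun l => ?_
  simp only [Function.comp_apply, id_eq, speed, neg_div]
  field_simp
  ring

lemma exists_sign_deriv_speed {c : ℝ} (hc : 0 < c) : ∃ lhat, 0 < lhat ∧
    ∀ l, 0 < l → SignType.sign (deriv (speed c) l) = SignType.sign (lhat - l) := by
  obtain ⟨x₀, hx₀, hgap⟩ := exists_sign_firstOrderGap
  refine ⟨2 * x₀ / c, by positivity, fun l hl => ?_⟩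
  rw [(hasDerivAt_speed c l).deriv, sign_mul, sign_pos (by positivity), one_mul,
    hgap _ (by positivity), show x₀ - l * c / 2 = c / 2 * (2 * x₀ / c - l) by field_simp,
    sign_mul, sign_pos (by positivity), one_mul]

theorem stmt19 (I : ℝ) (hI : 0 < I) :
    let h : ℝ → ℝ := fun l => 2 * l^2 * Phi (-(l * Real.sqrt I) / 2)
    h 0 = 0 ∧
    Tendsto h atTop (nhds 0) ∧
    (∀ l : ℝ, 0 < l → 0 < h l) ∧
    ∃ lhat : ℝ, 0 < lhat ∧ deriv h lhat = 0 ∧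
      (∀ l : ℝ, 0 < l → deriv h l = 0 → l = lhat) ∧
      IsMaxOn h (Set.Ici 0) lhat ∧
      2 * (2 * Phi (-(lhat * Real.sqrt I) / 2))
        = lhat * Real.sqrt I *
          (Real.exp (-(lhat * Real.sqrt I / 2)^2 / 2) / Real.sqrt (2*Real.pi)) := by
  intro h
  have hc : 0 < √I := sqrt_pos.2 hI
  obtain ⟨lhat, hlhat, hsign⟩ := exists_sign_deriv_speed hc
  have hcrit := (deriv_eq_zero_iff_of_sign_deriv hsign hlhat).2 rfl
  have hdiff : Differentiable ℝ (speed √I) := fun l => (hasDerivAt_speed _ l).differentiableAt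
  refine ⟨by simp [h], tendsto_speed_atTop hc, fun l hl => speed_pos hl, lhat, hlhat, hcrit,
    fun l hl => (deriv_eq_zero_iff_of_sign_deriv hsign hl).1,
    isMaxOn_of_sign_deriv hlhat.le hdiff.continuous.continuousOn hdiff.differentiableOn hsign, ?_⟩
  have hfoc : firstOrderGap (lhat * √I / 2) = 0 := by
    rw [(hasDerivAt_speed _ _).deriv] at hcrit
    exact (mul_eq_zero.1 hcrit).resolve_left (by positivity)
  rw [firstOrderGap, ← neg_div] at hfoc
  rw [← gaussianPDFReal_zero_one]
  linear_combination 2 * hfoc
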